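/- arXiv:1311.5067 — 7 statements merged into one kernel-verified Lean document; each statement's English description precedes it below -/
import Mathlib

section
/- For all 1 ≤ j ≤ n−k+1, the partial derivative of the partial Bell polynomial B_{n,k} with respect to X_j equals binomial(n,j) times B_{n−j,k−1}. -/
open Finset MvPolynomial

/-- The set of (n,k)-partition types: tuples (r₁,…,rₙ) (rⱼ = r (j-1)) with Σ rᵢ = k, Σ i·rᵢ = n. -/
def ptypes (n k : ℕ) : Finset (Fin n → ℕ) :=
  (Fintype.piFinset fun _ : Fin n => Finset.range (n + 1)).filter
    fun r => (∑ i, r i) = k ∧ (∑ i, (i.1 + 1) * r i) = n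

/-- Denominator of the Faà di Bruno coefficient: ∏ rᵢ!·(i!)^{rᵢ}. -/
def bruDenom {n : ℕ} (r : Fin n → ℕ) : ℕ :=
  ∏ i, (r i).factorial * ((i.1 + 1).factorial) ^ (r i)

/-- Partial exponential Bell polynomial (variable `X j` stands for X_{j+1}). -/
noncomputable def Bell (n k : ℕ) : MvPolynomial ℕ ℤ :=
  ∑ r ∈ ptypes n k,
    C ((n.factorial / bruDenom r : ℕ) : ℤ) * ∏ i, (X i.1 : MvPolynomial ℕ ℤ) ^ (r i)

/-- Associated Bell polynomial: Bell with X₁ (= `X 0`) set to 0. -/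
noncomputable def BellT (n k : ℕ) : MvPolynomial ℕ ℤ :=
  aeval (fun j => if j = 0 then 0 else (X j : MvPolynomial ℕ ℤ)) (Bell n k)

/-- Signed Stirling numbers of the first kind. -/
def s1 : ℕ → ℕ → ℤ
  | 0, 0 => 1
  | 0, _ + 1 => 0
  | _ + 1, 0 => 0
  | n + 1, k + 1 => s1 n k - n * s1 n (k + 1)

/-- Stirling numbers of the second kind. -/
def s2 : ℕ → ℕ → ℤ
  | 0, 0 => 1
  | 0, _ + 1 => 0
  | _ + 1, 0 => 0
  | n + 1, k + 1 => s2 n k + (k + 1) * s2 n (k + 1)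

/-- Unsigned Stirling numbers of the first kind (cycle numbers). -/
def cyc : ℕ → ℕ → ℕ
  | 0, 0 => 1
  | 0, _ + 1 => 0
  | _ + 1, 0 => 0
  | n + 1, k + 1 => cyc n k + n * cyc n (k + 1)

/-- First entry r₁ of a partition type (0 if the tuple is empty). -/
def firstEntry {m : ℕ} (r : Fin m → ℕ) : ℕ :=
  ∑ i ∈ Finset.univ.filter (fun i : Fin m => i.1 = 0), r i

/-- Multivariate Stirling polynomials of the first kind, via the differential recurrence. -/
noncomputable def Spoly : ℕ → ℕ → MvPolynomial ℕ ℤ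
  | 0, _ => 0
  | 1, k => if k = 1 then 1 else 0
  | n + 2, k =>
    if k = 0 then 0 else
      C (-(2 * (n : ℤ) + 1)) * X 1 * Spoly (n + 1) k
        + X 0 * (Spoly (n + 1) (k - 1)
          + ∑ j ∈ Finset.Icc 1 ((n + 1) - k + 1),
              X j * pderiv (j - 1) (Spoly (n + 1) k))


/-- ℕ-indexed denominator -/
def Dn (f : ℕ → ℕ) (M : ℕ) : ℕ :=
  ∏ i ∈ Finset.range M, (f i).factorial * ((i+1).factorial) ^ (f i)

lemma Dn_pos (f : ℕ → ℕ) (M : ℕ) : 0 < Dn f M :=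
  Finset.prod_pos fun i _ => Nat.mul_pos (Nat.factorial_pos _) (pow_pos (Nat.factorial_pos _) _)

lemma Dn_update (f : ℕ → ℕ) (M i : ℕ) (hi : i < M) (hfi : 1 ≤ f i) :
    Dn f M = f i * (i+1).factorial * Dn (Function.update f i (f i - 1)) M := by
  unfold Dn
  rw [← Finset.prod_erase_mul _ _ (Finset.mem_range.mpr hi),
      ← Finset.prod_erase_mul _ _ (Finset.mem_range.mpr hi)]
  have h1 : ∀ t ∈ (Finset.range M).erase i,
      (f t).factorial * ((t+1).factorial) ^ (f t)
        = (Function.update f i (f i - 1) t).factorial * ((t+1).factorial) ^ (Function.update f i (f i - 1) t) := by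
    intro t ht
    rw [Function.update_of_ne (Finset.ne_of_mem_erase ht)]
  rw [Finset.prod_congr rfl h1]
  rw [Function.update_self]
  obtain ⟨m, hm⟩ : ∃ m, f i = m + 1 := ⟨f i - 1, by omega⟩
  rw [hm]
  simp [Nat.factorial_succ, pow_succ]
  ring

lemma Dn_dvd : ∀ (n : ℕ) (f : ℕ → ℕ) (M : ℕ),
    (∑ i ∈ Finset.range M, (i+1) * f i) = n → Dn f M ∣ n.factorial := by
  intro n
  induction n using Nat.strong_induction_on with
  | _ n ih =>
    intro f M hsum
    rcases Nat.eq_zero_or_pos n with h0 | hpos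
    · subst h0
      have hz : ∀ i ∈ Finset.range M, f i = 0 := by
        intro i hi
        have := (Finset.sum_eq_zero_iff).mp hsum i hi
        simpa using this
      have : Dn f M = 1 := by
        unfold Dn
        apply Finset.prod_eq_one
        intro i hi; rw [hz i hi]; simp
      simp [this]
    · obtain ⟨N, rfl⟩ : ∃ N, n = N + 1 := ⟨n-1, by omega⟩
      have key : ∀ i ∈ Finset.range M, Dn f M ∣ (i+1) * f i * N.factorial := by
        intro i hi
        rcases Nat.eq_zero_or_pos (f i) with hz | hfi
        · simp [hz]
        · set f' := Function.update f i (f i - 1) with hf'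
          have hle : (i+1) * f i ≤ N + 1 := by
            rw [← hsum]
            exact Finset.single_le_sum (f := fun t => (t+1)*f t) (fun _ _ => Nat.zero_le _) hi
          have hiN : i ≤ N := by nlinarith
          have hptwise : ∀ t ∈ Finset.range M,
              (t+1) * f t = (t+1) * f' t + (if t = i then i+1 else 0) := by
            intro t _
            by_cases hti : t = i
            · subst hti
              obtain ⟨m, hm⟩ : ∃ m, f t = m + 1 := ⟨f t - 1, by omega⟩
              simp [hf', Function.update_self, hm]
              ring
            · simp [hf', Function.update_of_ne hti, hti]
          have hsum' : (∑ t ∈ Finset.range M, (t+1) * f' t) = N - i := by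
            have := Finset.sum_congr rfl hptwise
            rw [Finset.sum_add_distrib, Finset.sum_ite_eq' (Finset.range M) i (fun _ => i+1)] at this
            simp [hi] at this
            omega
          have ihd : Dn f' M ∣ (N - i).factorial := ih (N - i) (by omega) f' M hsum'
          have hD : Dn f M = f i * (i+1).factorial * Dn f' M := Dn_update f M i (Finset.mem_range.mp hi) hfi
          have hkey : (i+1) * f i * N.factorial
              = f i * (i+1).factorial * (N.choose i * (N - i).factorial) := by
            have hNf : N.choose i * i.factorial * (N-i).factorial = N.factorial :=
              Nat.choose_mul_factorial_mul_factorial hiN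
            rw [← hNf, Nat.factorial_succ]
            ring
          rw [hkey, hD]
          exact mul_dvd_mul_left _ (Dvd.dvd.mul_left ihd _)
      have htot : (N+1).factorial = ∑ i ∈ Finset.range M, (i+1) * f i * N.factorial := by
        rw [← Finset.sum_mul, hsum, Nat.factorial_succ]
      rw [htot]
      exact Finset.dvd_sum key
def extF {m : ℕ} (r : Fin m → ℕ) : ℕ → ℕ := fun i => if h : i < m then r ⟨i, h⟩ else 0

lemma extF_coe {m : ℕ} (r : Fin m → ℕ) (i : Fin m) : extF r i.1 = r i := by
  simp [extF, i.2]

lemma extF_ge {m : ℕ} (r : Fin m → ℕ) {i : ℕ} (h : m ≤ i) : extF r i = 0 :=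
  dif_neg (by omega)

lemma sum_extF {β : Type*} [AddCommMonoid β] {m : ℕ} (r : Fin m → ℕ) (G : ℕ → ℕ → β)
    (hG : ∀ i, G i 0 = 0) (M : ℕ) (hM : m ≤ M) :
    (∑ i : Fin m, G i.1 (r i)) = ∑ i ∈ Finset.range M, G i (extF r i) := by
  have h1 : (∑ i : Fin m, G i.1 (r i)) = ∑ i ∈ Finset.range m, G i (extF r i) := by
    rw [← Fin.sum_univ_eq_sum_range (fun i => G i (extF r i)) m]
    exact Finset.sum_congr rfl fun i _ => by rw [extF_coe]
  rw [h1]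
  apply Finset.sum_subset (Finset.range_subset_range.mpr hM)
  intro i _ hi
  rw [extF_ge r (by simpa using hi), hG]

lemma prod_extF {β : Type*} [CommMonoid β] {m : ℕ} (r : Fin m → ℕ) (G : ℕ → ℕ → β)
    (hG : ∀ i, G i 0 = 1) (M : ℕ) (hM : m ≤ M) :
    (∏ i : Fin m, G i.1 (r i)) = ∏ i ∈ Finset.range M, G i (extF r i) := by
  have h1 : (∏ i : Fin m, G i.1 (r i)) = ∏ i ∈ Finset.range m, G i (extF r i) := by
    rw [← Fin.prod_univ_eq_prod_range (fun i => G i (extF r i)) m]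
    exact Finset.prod_congr rfl fun i _ => by rw [extF_coe]
  rw [h1]
  apply Finset.prod_subset (Finset.range_subset_range.mpr hM)
  intro i _ hi
  rw [extF_ge r (by simpa using hi), hG]

lemma mem_ptypes {n k : ℕ} (r : Fin n → ℕ) :
    r ∈ ptypes n k ↔
      (∑ i ∈ Finset.range n, extF r i) = k ∧
      (∑ i ∈ Finset.range n, (i+1) * extF r i) = n := by
  rw [ptypes, Finset.mem_filter]
  rw [sum_extF r (fun _ x => x) (fun _ => rfl) n le_rfl,
      sum_extF r (fun i x => (i+1) * x) (fun i => by simp) n le_rfl]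
  constructor
  · rintro ⟨-, h1, h2⟩; exact ⟨h1, h2⟩
  · rintro ⟨h1, h2⟩
    refine ⟨?_, h1, h2⟩
    rw [Fintype.mem_piFinset]
    intro i
    rw [Finset.mem_range]
    have h3 : (i.1+1) * extF r i.1 ≤ n := by
      have := Finset.single_le_sum (f := fun t => (t+1) * extF r t)
        (fun _ _ => Nat.zero_le _) (Finset.mem_range.mpr i.2)
      rw [h2] at this
      exact this
    have h4 : extF r i.1 ≤ n := le_trans (Nat.le_mul_of_pos_left _ (by omega)) h3
    have h5 : r i ≤ n := (extF_coe r i) ▸ h4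
    exact Nat.lt_succ_of_le h5

lemma bruDenom_eq {n : ℕ} (r : Fin n → ℕ) : bruDenom r = Dn (extF r) n :=
  prod_extF r (fun i x => x.factorial * ((i+1).factorial) ^ x) (fun i => by simp) n le_rfl

noncomputable def expo (f : ℕ → ℕ) (M : ℕ) : ℕ →₀ ℕ := ∑ i ∈ Finset.range M, Finsupp.single i (f i)

lemma prod_X_pow (f : ℕ → ℕ) (M : ℕ) :
    (∏ i ∈ Finset.range M, (X i : MvPolynomial ℕ ℤ) ^ f i) = monomial (expo f M) 1 := by
  induction M with
  | zero => simp [expo]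
  | succ M ih =>
    rw [Finset.prod_range_succ, ih, X_pow_eq_monomial, monomial_mul, one_mul]
    congr 1
    rw [expo, expo, Finset.sum_range_succ]

lemma Bell_eq (n k : ℕ) :
    Bell n k = ∑ r ∈ ptypes n k,
      monomial (expo (extF r) n) ((n.factorial / Dn (extF r) n : ℕ) : ℤ) := by
  unfold Bell
  refine Finset.sum_congr rfl fun r _ => ?_
  rw [prod_extF r (fun i x => (X i : MvPolynomial ℕ ℤ) ^ x) (fun i => pow_zero _) n le_rfl,
      prod_X_pow, C_mul_monomial, mul_one, bruDenom_eq]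

/-- restriction of an ℕ-indexed function to `Fin m` -/
def restr (m : ℕ) (g : ℕ → ℕ) : Fin m → ℕ := fun i => g i.1

/-- subtract 1 at position j1 -/
def fmod (j1 : ℕ) (f : ℕ → ℕ) : ℕ → ℕ := fun t => f t - if t = j1 then 1 else 0

/-- add 1 at position j1 -/
def fadd (j1 : ℕ) (f : ℕ → ℕ) : ℕ → ℕ := fun t => f t + if t = j1 then 1 else 0

section C
variable {n k j : ℕ}

lemma extF_restr (m : ℕ) (g : ℕ → ℕ) (hv : ∀ t, m ≤ t → g t = 0) :
    extF (restr m g) = g := by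
  funext t
  by_cases h : t < m
  · show dite _ _ _ = _
    rw [dif_pos h]; rfl
  · rw [extF_ge _ (by omega), hv t (by omega)]

lemma sum_shrink {β : Type*} [AddCommMonoid β] (f : ℕ → ℕ) (G : ℕ → ℕ → β)
    (hG : ∀ i, G i 0 = 0) {m M : ℕ} (hmM : m ≤ M) (hv : ∀ t, m ≤ t → f t = 0) :
    ∑ i ∈ Finset.range M, G i (f i) = ∑ i ∈ Finset.range m, G i (f i) :=
  (Finset.sum_subset (Finset.range_subset_range.mpr hmM)
    fun i _ hi => by rw [hv i (by simpa using hi), hG]).symm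

lemma prod_shrink {β : Type*} [CommMonoid β] (f : ℕ → ℕ) (G : ℕ → ℕ → β)
    (hG : ∀ i, G i 0 = 1) {m M : ℕ} (hmM : m ≤ M) (hv : ∀ t, m ≤ t → f t = 0) :
    ∏ i ∈ Finset.range M, G i (f i) = ∏ i ∈ Finset.range m, G i (f i) :=
  (Finset.prod_subset (Finset.range_subset_range.mpr hmM)
    fun i _ hi => by rw [hv i (by simpa using hi), hG]).symm

lemma expo_apply_lt (f : ℕ → ℕ) (M : ℕ) {t : ℕ} (ht : t < M) : (expo f M) t = f t := by
  rw [expo, Finsupp.finset_sum_apply]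
  have h1 : ∀ i ∈ Finset.range M, (Finsupp.single i (f i)) t = if i = t then f i else 0 := by
    intro i _; rw [Finsupp.single_apply]
  rw [Finset.sum_congr rfl h1, Finset.sum_ite_eq' (Finset.range M) t f]
  simp [ht]

variable (hk : 1 ≤ k) (hj1 : 1 ≤ j) (hjn : j ≤ n)
  (r : Fin n → ℕ) (hr : r ∈ ptypes n k) (h0 : extF r (j-1) ≠ 0)

include hj1 hjn hr h0 in
lemma vanish : ∀ t, n - j ≤ t → fmod (j-1) (extF r) t = 0 := by
  obtain ⟨hsk, hsn⟩ := (mem_ptypes r).mp hr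
  intro t ht
  by_cases htn : n ≤ t
  · rw [fmod, extF_ge r htn]; simp
  · push_neg at htn
    have hj1n : j - 1 < n := by omega
    have hjR : j * extF r (j-1) ≤ n := by
      have h := Finset.single_le_sum (f := fun t => (t+1) * extF r t)
        (fun _ _ => Nat.zero_le _) (Finset.mem_range.mpr hj1n)
      rw [hsn] at h
      simpa [Nat.sub_add_cancel hj1] using h
    by_cases hte : t = j-1
    · subst hte
      have hR1 : extF r (j-1) ≤ 1 := by
        by_contra h
        push_neg at h
        have h2 : j * 2 ≤ j * extF r (j-1) := Nat.mul_le_mul_left j h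
        have h3 := le_trans h2 hjR
        omega
      rw [fmod]; simp; omega
    · have hpair : (t+1) * extF r t + j * extF r (j-1) ≤ n := by
        have hsub : ({t, j-1} : Finset ℕ) ⊆ Finset.range n := by
          intro x hx
          simp only [Finset.mem_insert, Finset.mem_singleton] at hx
          rcases hx with rfl | rfl <;> simp <;> omega
        have h := Finset.sum_le_sum_of_subset (f := fun t => (t+1) * extF r t) hsub
        rw [Finset.sum_pair hte, hsn] at h
        simpa [Nat.sub_add_cancel hj1] using h
      have hRt : extF r t = 0 := by
        by_contra h
        have h1 : 1 ≤ extF r t := Nat.pos_of_ne_zero h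
        have h2 : 1 ≤ extF r (j-1) := Nat.pos_of_ne_zero h0
        have ha : t+1 ≤ (t+1) * extF r t := Nat.le_mul_of_pos_right _ h1
        have hb : j ≤ j * extF r (j-1) := Nat.le_mul_of_pos_right _ h2
        have hc : t + 1 + j ≤ n := le_trans (Nat.add_le_add ha hb) hpair
        omega
      rw [fmod, hRt]; simp

include h0 in
lemma pointwise : ∀ t, extF r t = fmod (j-1) (extF r) t + (if t = j-1 then 1 else 0) := by
  intro t
  rw [fmod]
  by_cases h : t = j-1
  · subst h
    have := Nat.pos_of_ne_zero h0
    simp; omega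
  · simp [h]

include hj1 hjn hr h0 in
lemma sums_fmod :
    (∑ t ∈ Finset.range n, fmod (j-1) (extF r) t) = k - 1 ∧
    (∑ t ∈ Finset.range n, (t+1) * fmod (j-1) (extF r) t) = n - j := by
  obtain ⟨hsk, hsn⟩ := (mem_ptypes r).mp hr
  have hj1n : j - 1 < n := by omega
  have hite : (∑ t ∈ Finset.range n, (if t = j-1 then 1 else 0)) = 1 := by
    rw [Finset.sum_ite_eq' (Finset.range n) (j-1) (fun _ => 1)]
    simp [hj1n]
  have hite2 : (∑ t ∈ Finset.range n, (if t = j-1 then j else 0)) = j := by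
    rw [Finset.sum_ite_eq' (Finset.range n) (j-1) (fun _ => j)]
    simp [hj1n]
  constructor
  · have h1 : (∑ t ∈ Finset.range n, extF r t)
        = (∑ t ∈ Finset.range n, fmod (j-1) (extF r) t) + 1 := by
      rw [Finset.sum_congr rfl (fun t _ => pointwise r h0 t), Finset.sum_add_distrib, hite]
    omega
  · have h2 : ∀ t ∈ Finset.range n, (t+1) * extF r t
        = (t+1) * fmod (j-1) (extF r) t + (if t = j-1 then j else 0) := by
      intro t _
      rw [pointwise r h0 t, mul_add]
      congr 1
      by_cases h : t = j-1
      · subst h; simp; omega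
      · simp [h]
    have h3 : (∑ t ∈ Finset.range n, (t+1) * extF r t)
        = (∑ t ∈ Finset.range n, (t+1) * fmod (j-1) (extF r) t) + j := by
      rw [Finset.sum_congr rfl h2, Finset.sum_add_distrib, hite2]
    omega

include hj1 hjn hr h0 in
lemma fwd_mem : restr (n-j) (fmod (j-1) (extF r)) ∈ ptypes (n-j) (k-1) := by
  have hv := vanish hj1 hjn r hr h0
  obtain ⟨c1, c2⟩ := sums_fmod hj1 hjn r hr h0
  rw [mem_ptypes, extF_restr _ _ hv]
  constructor
  · rw [← sum_shrink (fmod (j-1) (extF r)) (fun _ x => x) (fun _ => rfl) (Nat.sub_le n j) hv]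
    exact c1
  · rw [← sum_shrink (fmod (j-1) (extF r)) (fun i x => (i+1) * x) (fun i => by simp)
      (Nat.sub_le n j) hv]
    exact c2

end C
section D
variable {n k j : ℕ}

lemma extF_bwd (hj1 : 1 ≤ j) (hjn : j ≤ n) (r' : Fin (n-j) → ℕ) :
    extF (restr n (fadd (j-1) (extF r'))) = fadd (j-1) (extF r') := by
  apply extF_restr
  intro t ht
  rw [fadd, extF_ge r' (by omega), if_neg (by omega)]

lemma bwd_mem (hk : 1 ≤ k) (hj1 : 1 ≤ j) (hjn : j ≤ n)
    (r' : Fin (n-j) → ℕ) (hr' : r' ∈ ptypes (n-j) (k-1)) :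
    restr n (fadd (j-1) (extF r')) ∈ ptypes n k ∧
      extF (restr n (fadd (j-1) (extF r'))) (j-1) ≠ 0 := by
  have hj1n : j - 1 < n := by omega
  have he := extF_bwd hj1 hjn r'
  obtain ⟨hsk, hsn⟩ := (mem_ptypes r').mp hr'
  have hv : ∀ t, n - j ≤ t → extF r' t = 0 := fun t ht => extF_ge r' ht
  have hsk' : (∑ t ∈ Finset.range n, extF r' t) = k - 1 := by
    rw [sum_shrink (extF r') (fun _ x => x) (fun _ => rfl) (Nat.sub_le n j) hv]; exact hsk
  have hsn' : (∑ t ∈ Finset.range n, (t+1) * extF r' t) = n - j := by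
    rw [sum_shrink (extF r') (fun i x => (i+1)*x) (fun i => by simp) (Nat.sub_le n j) hv]
    exact hsn
  have hite : (∑ t ∈ Finset.range n, (if t = j-1 then 1 else 0)) = 1 := by
    rw [Finset.sum_ite_eq' (Finset.range n) (j-1) (fun _ => 1)]; simp [hj1n]
  have hite2 : (∑ t ∈ Finset.range n, (if t = j-1 then j else 0)) = j := by
    rw [Finset.sum_ite_eq' (Finset.range n) (j-1) (fun _ => j)]; simp [hj1n]
  refine ⟨?_, ?_⟩
  · rw [mem_ptypes, he]
    constructor
    · simp only [fadd]
      rw [Finset.sum_add_distrib, hsk', hite]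
      omega
    · have hp : ∀ t ∈ Finset.range n, (t+1) * fadd (j-1) (extF r') t
          = (t+1) * extF r' t + (if t = j-1 then j else 0) := by
        intro t _
        rw [fadd, mul_add]
        congr 1
        by_cases h : t = j-1
        · subst h; simp; omega
        · simp [h]
      rw [Finset.sum_congr rfl hp, Finset.sum_add_distrib, hsn', hite2]
      omega
  · rw [he, fadd]
    simp

lemma bwd_fwd (hj1 : 1 ≤ j) (hjn : j ≤ n) (r : Fin n → ℕ)
    (hr : r ∈ ptypes n k) (h0 : extF r (j-1) ≠ 0) :
    restr n (fadd (j-1) (extF (restr (n-j) (fmod (j-1) (extF r))))) = r := by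
  rw [extF_restr _ _ (vanish hj1 hjn r hr h0)]
  funext i
  show fadd (j-1) (fmod (j-1) (extF r)) i.1 = r i
  rw [fadd, ← pointwise r h0 i.1, extF_coe]

lemma fwd_bwd (hj1 : 1 ≤ j) (hjn : j ≤ n) (r' : Fin (n-j) → ℕ) :
    restr (n-j) (fmod (j-1) (extF (restr n (fadd (j-1) (extF r'))))) = r' := by
  rw [extF_bwd hj1 hjn r']
  funext i
  show fmod (j-1) (fadd (j-1) (extF r')) i.1 = r' i
  rw [fmod, fadd, Nat.add_sub_cancel]
  exact extF_coe r' i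

lemma expo_sub (hj1 : 1 ≤ j) (hjn : j ≤ n) (r : Fin n → ℕ)
    (hr : r ∈ ptypes n k) (h0 : extF r (j-1) ≠ 0) :
    expo (extF r) n - Finsupp.single (j-1) 1 = expo (fmod (j-1) (extF r)) (n-j) := by
  have hj1n : j - 1 < n := by omega
  have hv := vanish hj1 hjn r hr h0
  have e1 : expo (fmod (j-1) (extF r)) n = expo (fmod (j-1) (extF r)) (n-j) := by
    rw [expo, expo]
    exact sum_shrink _ (fun i x => Finsupp.single i x)
      (fun i => Finsupp.single_zero i) (Nat.sub_le n j) hv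
  have e2 : expo (extF r) n = expo (fmod (j-1) (extF r)) n + Finsupp.single (j-1) 1 := by
    rw [expo, expo]
    have hp : ∀ t ∈ Finset.range n, Finsupp.single t (extF r t)
        = Finsupp.single t (fmod (j-1) (extF r) t)
          + Finsupp.single t (if t = j-1 then 1 else 0) := by
      intro t _
      rw [pointwise r h0 t, Finsupp.single_add]
    rw [Finset.sum_congr rfl hp, Finset.sum_add_distrib]
    congr 1
    rw [Finset.sum_eq_single_of_mem (j-1) (Finset.mem_range.mpr hj1n)
      (fun b _ hb => by simp [hb])]
    simp
  rw [e2, add_tsub_cancel_right, e1]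

lemma coeff_eq (hj1 : 1 ≤ j) (hjn : j ≤ n) (r : Fin n → ℕ)
    (hr : r ∈ ptypes n k) (h0 : extF r (j-1) ≠ 0) :
    (n.factorial / Dn (extF r) n) * extF r (j-1)
      = n.choose j * ((n-j).factorial / Dn (fmod (j-1) (extF r)) (n-j)) := by
  have hj1n : j - 1 < n := by omega
  have hv := vanish hj1 hjn r hr h0
  obtain ⟨hsk, hsn⟩ := (mem_ptypes r).mp hr
  obtain ⟨c1, c2⟩ := sums_fmod hj1 hjn r hr h0
  have hupd : fmod (j-1) (extF r) = Function.update (extF r) (j-1) (extF r (j-1) - 1) := by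
    funext t
    by_cases h : t = j-1
    · subst h; simp [fmod, Function.update_self]
    · simp [fmod, h, Function.update_of_ne h]
  have hD1 : Dn (extF r) n = extF r (j-1) * j.factorial * Dn (fmod (j-1) (extF r)) n := by
    have h := Dn_update (extF r) n (j-1) hj1n (Nat.pos_of_ne_zero h0)
    rw [← hupd, Nat.sub_add_cancel hj1] at h
    exact h
  have hD2 : Dn (fmod (j-1) (extF r)) (n-j) = Dn (fmod (j-1) (extF r)) n := by
    unfold Dn
    exact (prod_shrink _ (fun i x => x.factorial * ((i+1).factorial)^x)
      (fun i => by simp) (Nat.sub_le n j) hv).symm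
  have c3 : Dn (extF r) n ∣ n.factorial := Dn_dvd n (extF r) n hsn
  have c4 : Dn (fmod (j-1) (extF r)) n ∣ (n-j).factorial := Dn_dvd (n-j) _ n c2
  rw [hD2]
  set D := Dn (fmod (j-1) (extF r)) n with hDdef
  have hDpos : 0 < D := Dn_pos _ _
  have e1 : (n.factorial / Dn (extF r) n) * extF r (j-1) * (D * j.factorial)
      = n.factorial := by
    have h : (n.factorial / Dn (extF r) n) * extF r (j-1) * (D * j.factorial)
        = (n.factorial / Dn (extF r) n) * (extF r (j-1) * j.factorial * D) := by ring
    rw [h, ← hD1, Nat.div_mul_cancel c3]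
  have e2 : n.choose j * ((n-j).factorial / D) * (D * j.factorial) = n.factorial := by
    have h5 : (n-j).factorial / D * D = (n-j).factorial := Nat.div_mul_cancel c4
    have h : n.choose j * ((n-j).factorial / D) * (D * j.factorial)
        = n.choose j * ((n-j).factorial / D * D) * j.factorial := by ring
    rw [h, h5]
    have h6 := Nat.choose_mul_factorial_mul_factorial hjn
    rw [mul_right_comm]
    exact h6
  exact Nat.eq_of_mul_eq_mul_right (Nat.mul_pos hDpos (Nat.factorial_pos j))
    (e1.trans e2.symm)

end D

theorem bell_pderiv (n k j : ℕ) (hk : 1 ≤ k) (hkn : k ≤ n)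
    (hj1 : 1 ≤ j) (hj : j ≤ n - k + 1) :
    pderiv (j - 1) (Bell n k) = C ((n.choose j : ℤ)) * Bell (n - j) (k - 1) := by
  have hjn : j ≤ n := by omega
  have hj1nn : j - 1 < n := by omega
  rw [Bell_eq n k, map_sum, Bell_eq (n-j) (k-1), Finset.mul_sum]
  have hterm : ∀ r ∈ ptypes n k,
      pderiv (j-1) (monomial (expo (extF r) n) ((n.factorial / Dn (extF r) n : ℕ) : ℤ))
      = monomial (expo (extF r) n - Finsupp.single (j-1) 1)
          (((n.factorial / Dn (extF r) n : ℕ) : ℤ) * ((extF r (j-1) : ℕ) : ℤ)) := by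
    intro r _
    rw [pderiv_monomial, expo_apply_lt _ _ hj1nn]
  rw [Finset.sum_congr rfl hterm]
  have hR : ∀ r' ∈ ptypes (n-j) (k-1),
      (C ((n.choose j : ℤ)) : MvPolynomial ℕ ℤ)
          * monomial (expo (extF r') (n-j)) (((n-j).factorial / Dn (extF r') (n-j) : ℕ) : ℤ)
      = monomial (expo (extF r') (n-j))
          (((n.choose j : ℕ) : ℤ) * (((n-j).factorial / Dn (extF r') (n-j) : ℕ) : ℤ)) := by
    intro r' _
    rw [C_mul_monomial]
  rw [Finset.sum_congr rfl hR]
  rw [← Finset.sum_filter_of_ne (p := fun r => extF r (j-1) ≠ 0)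
    (fun r _ hne h0 => hne (by rw [h0]; simp))]
  refine Finset.sum_nbij' (fun r => restr (n-j) (fmod (j-1) (extF r)))
    (fun r' => restr n (fadd (j-1) (extF r'))) ?_ ?_ ?_ ?_ ?_
  · intro r hrf
    rw [Finset.mem_filter] at hrf
    exact fwd_mem hj1 hjn r hrf.1 hrf.2
  · intro r' hr'
    rw [Finset.mem_filter]
    exact (bwd_mem hk hj1 hjn r' hr')
  · intro r hrf
    rw [Finset.mem_filter] at hrf
    exact bwd_fwd hj1 hjn r hrf.1 hrf.2
  · intro r' _
    exact fwd_bwd hj1 hjn r'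
  · intro r hrf
    rw [Finset.mem_filter] at hrf
    obtain ⟨hr, h0⟩ := hrf
    rw [extF_restr _ _ (vanish hj1 hjn r hr h0),
        expo_sub hj1 hjn r hr h0]
    congr 1
    exact_mod_cast congrArg (Nat.cast : ℕ → ℤ) (coeff_eq hj1 hjn r hr h0)
end

section
/- Evaluating the Lah polynomial at alternating signs gives the signed Lah numbers: L_{n,k}((−1)¹, (−1)², …, (−1)^{n−k+1}) = (−1)^n · (n!/k!) · binomial(n−1,k−1), for 1 ≤ k ≤ n. -/
open Finset MvPolynomial

/-- Lah polynomials. -/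
noncomputable def Lah (n k : ℕ) : MvPolynomial ℕ ℤ :=
  ∑ r ∈ ptypes n k,
    C ((n.factorial / ∏ i, (r i).factorial : ℕ) : ℤ) * ∏ i, (X i.1 : MvPolynomial ℕ ℤ) ^ (r i)

/-!
At alternating signs the monomial of a partition type `r` evaluates to `(-1) ^ (∑ i·rᵢ) = (-1) ^ n`,
and its coefficient `n! / ∏ rᵢ!` factors as `(n! / k!) · multinomial(r)`. Summing the
multinomial coefficients over all `(n,k)`-partition types counts the compositions of `n` into
`k` positive parts, of which there are `binomial(n-1, k-1)`; this is read off by comparing the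
coefficient of `Xⁿ` in `(X + X² + ⋯ + Xⁿ)ᵏ` and in `(X / (1 - X))ᵏ`.
-/

lemma ptypes_eq_filter_piAntidiag (n k : ℕ) :
    ptypes n k =
      (piAntidiag univ k).filter fun r : Fin n → ℕ => ∑ i, (i.1 + 1) * r i = n := by
  ext r
  simp only [ptypes, mem_filter, mem_piAntidiag, Fintype.mem_piFinset, mem_range, mem_univ,
    implies_true, and_true]
  refine ⟨fun ⟨_, hk, hn⟩ => ⟨hk, hn⟩, fun ⟨hk, hn⟩ => ⟨fun i => Nat.lt_succ_of_le ?_, hk, hn⟩⟩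
  calc r i ≤ (i.1 + 1) * r i := Nat.le_mul_of_pos_left _ i.1.succ_pos
    _ ≤ ∑ j, (j.1 + 1) * r j :=
      single_le_sum (f := fun j : Fin n => (j.1 + 1) * r j) (fun _ _ => Nat.zero_le _)
        (mem_univ i)
    _ = n := hn

namespace PowerSeries

variable {R : Type*}

lemma coeff_pow_eq_of_X_pow_dvd_sub [CommRing R] {f g : R⟦X⟧} {n : ℕ}
    (h : X ^ (n + 1) ∣ f - g) (k : ℕ) : coeff n (f ^ k) = coeff n (g ^ k) := by
  have := X_pow_dvd_iff.mp (h.trans (sub_dvd_pow_sub_pow f g k)) n n.lt_succ_self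
  rwa [map_sub, sub_eq_zero] at this

lemma coeff_sum_X_pow_succ_pow [CommSemiring R] (n k : ℕ) :
    coeff n ((∑ i : Fin n, (X : R⟦X⟧) ^ (i.1 + 1)) ^ k) =
      ∑ r ∈ ptypes n k, (Nat.multinomial univ r : R) := by
  rw [sum_pow_eq_sum_piAntidiag, map_sum, ptypes_eq_filter_piAntidiag, sum_filter]
  refine sum_congr rfl fun r _ => ?_
  simp_rw [← pow_mul, prod_pow_eq_pow_sum, ← map_natCast (C (R := R)), coeff_C_mul,
    coeff_X_pow, eq_comm (a := n)]
  split_ifs <;> simp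

lemma coeff_X_mul_mk_one [CommSemiring R] (m : ℕ) :
    coeff m (X * mk 1 : R⟦X⟧) = if m = 0 then 0 else 1 := by
  rcases m with _ | m
  · simp
  · rw [mul_comm, coeff_succ_mul_X, coeff_mk]
    simp

lemma X_pow_succ_dvd_X_mul_mk_one_sub [CommRing R] (n : ℕ) :
    X ^ (n + 1) ∣ X * mk 1 - ∑ i : Fin n, (X : R⟦X⟧) ^ (i.1 + 1) := by
  refine X_pow_dvd_iff.mpr fun m hm => ?_
  rw [map_sub, map_sum, coeff_X_mul_mk_one, sub_eq_zero]
  simp only [coeff_X_pow]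
  rcases Nat.eq_zero_or_pos m with rfl | hm0
  · simp
  · rw [if_neg hm0.ne', sum_eq_single_of_mem (⟨m - 1, by omega⟩ : Fin n) (mem_univ _)]
    · exact (if_pos (show m = m - 1 + 1 by omega)).symm
    · intro i _ hi
      exact if_neg fun h => hi (Fin.ext (by simp; omega))

lemma coeff_X_mul_mk_one_pow [CommRing R] {n k : ℕ} (hk : 1 ≤ k) (hkn : k ≤ n) :
    coeff n ((X * mk 1 : R⟦X⟧) ^ k) = (n - 1).choose (k - 1) := by
  obtain ⟨j, rfl⟩ := Nat.exists_eq_add_of_le' hk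
  rw [mul_pow, mul_comm, coeff_mul_X_pow' _ _ n, if_pos hkn, mk_one_pow_eq_mk_choose_add,
    coeff_mk, Nat.add_sub_cancel, show j + (n - (j + 1)) = n - 1 by omega]

end PowerSeries

open PowerSeries in
/-- Both sides count the compositions of `n` into `k` positive parts. -/
theorem sum_multinomial_ptypes {n k : ℕ} (hk : 1 ≤ k) (hkn : k ≤ n) :
    ∑ r ∈ ptypes n k, Nat.multinomial univ r = (n - 1).choose (k - 1) := by
  have := coeff_pow_eq_of_X_pow_dvd_sub (X_pow_succ_dvd_X_mul_mk_one_sub (R := ℤ) n) k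
  rw [coeff_X_mul_mk_one_pow hk hkn, coeff_sum_X_pow_succ_pow] at this
  exact_mod_cast this.symm

lemma factorial_div_prod_factorial_eq {ι : Type*} (s : Finset ι) (r : ι → ℕ) {n : ℕ}
    (h : ∑ i ∈ s, r i ≤ n) :
    n.factorial / ∏ i ∈ s, (r i).factorial =
      n.factorial / (∑ i ∈ s, r i).factorial * Nat.multinomial s r := by
  rw [Nat.multinomial, ← Nat.mul_div_assoc _ (Nat.prod_factorial_dvd_factorial_sum s r),
    Nat.div_mul_cancel (Nat.factorial_dvd_factorial h)]

lemma eval_alternating_prod_X_pow {n : ℕ} {r : Fin n → ℕ} (hr : ∑ i, (i.1 + 1) * r i = n) :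
    eval (fun i => (-1 : ℤ) ^ (i + 1)) (∏ i, (X i.1 : MvPolynomial ℕ ℤ) ^ (r i)) =
      (-1) ^ n := by
  simp only [map_prod, map_pow, eval_X, ← pow_mul, prod_pow_eq_pow_sum, hr]

theorem lah_eval_alternating (n k : ℕ) (hk : 1 ≤ k) (hkn : k ≤ n) :
    eval (fun i => (-1 : ℤ) ^ (i + 1)) (Lah n k) =
      (-1) ^ n * ((n.factorial / k.factorial : ℕ) : ℤ) * ((n - 1).choose (k - 1)) := by
  have hterm : ∀ r ∈ ptypes n k,
      eval (fun i => (-1 : ℤ) ^ (i + 1))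
          (C ((n.factorial / ∏ i, (r i).factorial : ℕ) : ℤ) *
            ∏ i, (X i.1 : MvPolynomial ℕ ℤ) ^ (r i)) =
        (-1) ^ n * ((n.factorial / k.factorial : ℕ) : ℤ) * Nat.multinomial univ r := by
    intro r hr
    obtain ⟨-, hsum, hweight⟩ := mem_filter.mp hr
    rw [map_mul, eval_C, eval_alternating_prod_X_pow hweight,
      factorial_div_prod_factorial_eq univ r (hsum ▸ hkn), hsum]
    push_cast
    ring
  rw [Lah, map_sum, sum_congr rfl hterm, ← mul_sum, ← Nat.cast_sum, sum_multinomial_ptypes hk hkn]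
end

section
/- Schlömilch's formula: for 1 ≤ k ≤ n, s₁(n,k) = Σ_{r=k−1}^{n−1} (−1)^{n−1−r} · binomial(2n−2−r, k−1) · binomial(2n−k, r+1−k) · s₂(2n−1−k−r, n−1−r). -/
/-!
The argument goes through the associated Stirling numbers `s2Assoc` (partitions without
singleton blocks). Splitting off the singletons gives
`s₂(m + j, j) = ∑ₜ C(m + j, m + t) s2Assoc m t`, and
`s₁(m + p + 1, p + 1) = ∑ⱼ (-1)ʲ C(m + p + j, p) s2Assoc m j` because the right-hand side
satisfies the recurrence of `s₁`. Substituting the first expansion into Schlömilch's sum and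
exchanging the order of summation, the coefficient of each `s2Assoc m t` collapses to the second
formula by the Chu–Vandermonde identity applied to `C(-A - 1, i) = (-1)ⁱ C(A + i, i)`.
-/

open Finset MvPolynomial

theorem s1_succ_succ (n k : ℕ) : s1 (n + 1) (k + 1) = s1 n k - n * s1 n (k + 1) := rfl

theorem s2_succ_succ (n k : ℕ) : s2 (n + 1) (k + 1) = s2 n k + (k + 1) * s2 n (k + 1) := rfl

theorem s1_eq_neg_one_pow_mul_stirlingFirst :
    ∀ n k : ℕ, s1 n k = (-1) ^ (n + k) * Nat.stirlingFirst n k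
  | 0, 0 | 0, _ + 1 | _ + 1, 0 => by simp [s1, Nat.stirlingFirst]
  | n + 1, k + 1 => by
    rw [s1_succ_succ, s1_eq_neg_one_pow_mul_stirlingFirst n k,
      s1_eq_neg_one_pow_mul_stirlingFirst n (k + 1), Nat.stirlingFirst_succ_succ]
    push_cast
    ring

theorem s2_eq_stirlingSecond : ∀ n k : ℕ, s2 n k = Nat.stirlingSecond n k
  | 0, 0 | 0, _ + 1 | _ + 1, 0 => by simp [s2, Nat.stirlingSecond]
  | n + 1, k + 1 => by
    rw [s2_succ_succ, s2_eq_stirlingSecond n k, s2_eq_stirlingSecond n (k + 1),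
      Nat.stirlingSecond_succ_succ]
    push_cast
    ring

theorem s1_self (n : ℕ) : s1 n n = 1 := by
  simp [s1_eq_neg_one_pow_mul_stirlingFirst, Nat.stirlingFirst_self, ← two_mul]

theorem s2_self (n : ℕ) : s2 n n = 1 := by
  simp [s2_eq_stirlingSecond, Nat.stirlingSecond_self]

/-- `s2Assoc m j` counts the partitions of an `(m + j)`-element set into `j` blocks,
all of size at least two. -/
def s2Assoc : ℕ → ℕ → ℤ
  | 0, 0 => 1
  | 0, _ + 1 => 0
  | _ + 1, 0 => 0
  | m + 1, j + 1 => (j + 1) * s2Assoc m (j + 1) + (m + j + 1) * s2Assoc m j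

theorem s2Assoc_succ_succ (m j : ℕ) :
    s2Assoc (m + 1) (j + 1) = (j + 1) * s2Assoc m (j + 1) + (m + j + 1) * s2Assoc m j := rfl

theorem s2Assoc_eq_zero_of_lt : ∀ {m j : ℕ}, m < j → s2Assoc m j = 0
  | _, 0, h => absurd h (Nat.not_lt_zero _)
  | 0, _ + 1, _ => rfl
  | m + 1, j + 1, h => by
    rw [s2Assoc_succ_succ, s2Assoc_eq_zero_of_lt (by omega : m < j + 1),
      s2Assoc_eq_zero_of_lt (by omega : m < j)]
    ring

theorem sum_mul_s2Assoc_succ (f : ℕ → ℤ) (m : ℕ) :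
    ∑ j ∈ range (m + 2), f j * s2Assoc (m + 1) j =
      ∑ j ∈ range (m + 1), (j * f j + (m + j + 1) * f (j + 1)) * s2Assoc m j := by
  have hshift : ∑ j ∈ range (m + 1), (j + 1 : ℤ) * f (j + 1) * s2Assoc m (j + 1) =
      ∑ j ∈ range (m + 1), (j : ℤ) * f j * s2Assoc m j := by
    have h := sum_range_succ' (fun j => (j : ℤ) * f j * s2Assoc m j) (m + 1)
    rw [sum_range_succ, s2Assoc_eq_zero_of_lt (lt_add_one m)] at h
    push_cast at h
    linarith
  calc ∑ j ∈ range (m + 2), f j * s2Assoc (m + 1) j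
      = ∑ j ∈ range (m + 1), ((j + 1 : ℤ) * f (j + 1) * s2Assoc m (j + 1)
          + (m + j + 1) * f (j + 1) * s2Assoc m j) := by
        rw [sum_range_succ', show s2Assoc (m + 1) 0 = 0 from rfl, mul_zero, add_zero]
        refine sum_congr rfl fun j _ => ?_
        rw [s2Assoc_succ_succ]
        ring
    _ = ∑ j ∈ range (m + 1), (j * f j + (m + j + 1) * f (j + 1)) * s2Assoc m j := by
        rw [sum_add_distrib, hshift, ← sum_add_distrib]
        exact sum_congr rfl fun j _ => by ring

theorem succ_mul_choose_succ_eq_sub_mul_choose (N K : ℕ) :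
    ((K : ℤ) + 1) * N.choose (K + 1) = ((N : ℤ) - K) * N.choose K := by
  rcases le_or_gt K N with h | h
  · have := Nat.choose_succ_right_eq N K
    zify [h] at this
    linarith
  · simp [Nat.choose_eq_zero_of_lt h, Nat.choose_eq_zero_of_lt (h.trans (lt_add_one K))]

theorem s2_add_eq_sum_s2Assoc : ∀ m b : ℕ,
    s2 (m + b) b = ∑ t ∈ range (m + 1), ((m + b).choose (m + t) : ℤ) * s2Assoc m t
  | 0, b => by simp [s2_self, show s2Assoc 0 0 = 1 from rfl]
  | m + 1, 0 => by
    refine (sum_eq_zero fun t _ => ?_).symm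
    rcases t with _ | t
    · rfl
    · simp [Nat.choose_eq_zero_of_lt (by omega : m + 1 + 0 < m + 1 + (t + 1))]
  | m + 1, b + 1 => by
    have hprev := s2_add_eq_sum_s2Assoc (m + 1) b
    have hbelow := s2_add_eq_sum_s2Assoc m (b + 1)
    rw [show m + (b + 1) = m + 1 + b by omega] at hbelow
    have hstep : ∑ t ∈ range (m + 2), ((m + 1 + b).choose (m + t) : ℤ) * s2Assoc (m + 1) t =
        (b + 1) * ∑ t ∈ range (m + 1), ((m + 1 + b).choose (m + t) : ℤ) * s2Assoc m t := by
      rw [sum_mul_s2Assoc_succ, mul_sum]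
      refine sum_congr rfl fun t _ => ?_
      have h := succ_mul_choose_succ_eq_sub_mul_choose (m + 1 + b) (m + t)
      rw [show m + (t + 1) = m + t + 1 by omega]
      push_cast at h ⊢
      linear_combination s2Assoc m t * h
    rw [show m + 1 + (b + 1) = m + 1 + b + 1 by omega, s2_succ_succ, hprev, hbelow, ← hstep,
      ← sum_add_distrib]
    refine sum_congr rfl fun t _ => ?_
    rw [show m + 1 + t = m + t + 1 by omega, Nat.choose_succ_succ']
    push_cast
    ring

theorem s1_add_one_eq_sum_s2Assoc : ∀ m p : ℕ,
    s1 (m + p + 1) (p + 1) =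
      ∑ j ∈ range (m + 1), (-1) ^ j * ((m + p + j).choose p : ℤ) * s2Assoc m j
  | 0, p => by simp [s1_self, show s2Assoc 0 0 = 1 from rfl]
  | m + 1, 0 => by
    have ih := s1_add_one_eq_sum_s2Assoc m 0
    simp only [add_zero, zero_add, Nat.choose_zero_right, Nat.cast_one, mul_one] at ih ⊢
    rw [s1_succ_succ, show s1 (m + 1) 0 = 0 from rfl, ih, sum_mul_s2Assoc_succ,
      mul_sum, zero_sub, ← sum_neg_distrib]
    refine sum_congr rfl fun j _ => ?_
    push_cast
    ring
  | m + 1, p + 1 => by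
    have hprev := s1_add_one_eq_sum_s2Assoc (m + 1) p
    have hbelow := s1_add_one_eq_sum_s2Assoc m (p + 1)
    simp only [show ∀ j, m + (p + 1) + j = m + 1 + p + j from fun j => by omega] at hbelow
    have hstep :
        ∑ j ∈ range (m + 2),
            (-1) ^ j * ((m + 1 + p + j).choose (p + 1) : ℤ) * s2Assoc (m + 1) j =
          -((m + 1 + p + 1 : ℕ) : ℤ) * ∑ j ∈ range (m + 1),
            (-1) ^ j * ((m + 1 + p + j).choose (p + 1) : ℤ) * s2Assoc m j := by
      rw [sum_mul_s2Assoc_succ, mul_sum]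
      refine sum_congr rfl fun j _ => ?_
      have h := congrArg (Nat.cast : ℕ → ℤ) (Nat.choose_mul_succ_eq (m + 1 + p + j) (p + 1))
      rw [show m + 1 + p + j + 1 - (p + 1) = m + j + 1 by omega] at h
      rw [show m + 1 + p + (j + 1) = m + 1 + p + j + 1 by omega]
      push_cast at h ⊢
      linear_combination (-1) ^ j * s2Assoc m j * h
    rw [show m + 1 + (p + 1) + 1 = m + 1 + p + 1 + 1 by omega, s1_succ_succ, hprev, hbelow,
      sub_eq_add_neg, ← neg_mul, ← hstep, ← sum_add_distrib]
    refine sum_congr rfl fun j _ => ?_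
    rw [show m + 1 + (p + 1) + j = m + 1 + p + j + 1 by omega, Nat.choose_succ_succ']
    push_cast
    ring

theorem sum_neg_one_pow_mul_add_choose_mul_choose (A M : ℕ) :
    ∑ i ∈ range (M + 1), (-1) ^ i * ((A + i).choose i : ℤ) * (A + M + 1).choose (M - i) =
      1 := by
  have h := Ring.add_choose_eq (r := -((A : ℤ) + 1)) (s := ((A + M + 1 : ℕ) : ℤ)) M
    (Commute.all _ _)
  rw [show -((A : ℤ) + 1) + ((A + M + 1 : ℕ) : ℤ) = (M : ℤ) by push_cast; ring,
    Ring.choose_natCast, Nat.choose_self, Nat.sum_antidiagonal_eq_sum_range_succ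
      (fun i l => Ring.choose (-((A : ℤ) + 1)) i * Ring.choose ((A + M + 1 : ℕ) : ℤ) l),
    Nat.cast_one] at h
  refine Eq.trans (sum_congr rfl fun i _ => ?_) h.symm
  rw [Ring.choose_neg, Ring.choose_natCast,
    show (A : ℤ) + 1 + i - 1 = ((A + i : ℕ) : ℤ) by push_cast; ring, Ring.choose_natCast,
    Units.smul_def, Int.coe_negOnePow_natCast, smul_eq_mul]

theorem choose_mul_choose_add (p K i : ℕ) :
    (p + K + i).choose p * (K + i).choose K = (p + K).choose p * (p + K + i).choose i := by
  have h := Nat.choose_mul (n := p + K + i) (k := K + i) (Nat.le_add_left i K)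
  rw [show p + K + i - i = p + K by omega, Nat.add_sub_cancel] at h
  rw [show p + K + i = p + (K + i) by ring, Nat.choose_symm_add, Nat.choose_symm_add,
    ← add_assoc, h, Nat.choose_symm_add, mul_comm]

theorem sum_neg_one_pow_mul_choose_mul_choose_mul_choose (p m t : ℕ) (ht : t ≤ m) :
    ∑ j ∈ range (m + 1), (-1) ^ j * ((m + p + j).choose p : ℤ) *
        (2 * m + p + 1).choose (m - j) * (m + j).choose (m + t) =
      (-1) ^ t * (m + p + t).choose p := by
  obtain ⟨M, rfl⟩ : ∃ M, m = t + M := ⟨m - t, by omega⟩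
  rw [show t + M + 1 = t + (M + 1) by ring, sum_range_add, sum_eq_zero fun j hj => ?_, zero_add]
  · set K := t + M + t
    calc _ = (-1) ^ t * ((p + K).choose p : ℤ) * ∑ i ∈ range (M + 1),
          (-1) ^ i * ((p + K + i).choose i : ℤ) * (p + K + M + 1).choose (M - i) := by
          rw [mul_sum]
          refine sum_congr rfl fun i _ => ?_
          have h := congrArg (Nat.cast : ℕ → ℤ) (choose_mul_choose_add p K i)
          push_cast at h
          rw [show t + M + p + (t + i) = p + K + i by ring,
            show 2 * (t + M) + p + 1 = p + K + M + 1 by ring,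
            show t + M - (t + i) = M - i by omega, show t + M + (t + i) = K + i by ring]
          linear_combination (-1) ^ (t + i) * ((p + K + M + 1).choose (M - i) : ℤ) * h
      _ = (-1) ^ t * (t + M + p + t).choose p := by
          rw [sum_neg_one_pow_mul_add_choose_mul_choose, mul_one,
            show t + M + p + t = p + K by ring]
  · rw [Nat.choose_eq_zero_of_lt (Nat.add_lt_add_left (mem_range.mp hj) (t + M))]
    simp

theorem s1_add_one_eq_sum_s2 (m p : ℕ) :
    s1 (m + p + 1) (p + 1) = ∑ j ∈ range (m + 1),
      (-1) ^ j * ((m + p + j).choose p : ℤ) * (2 * m + p + 1).choose (m - j) * s2 (m + j) j := by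
  simp_rw [s2_add_eq_sum_s2Assoc, mul_sum]
  rw [sum_comm, s1_add_one_eq_sum_s2Assoc]
  refine sum_congr rfl fun t ht => ?_
  rw [← sum_neg_one_pow_mul_choose_mul_choose_mul_choose p m t
    (Nat.lt_succ_iff.mp (mem_range.mp ht)), sum_mul]
  exact sum_congr rfl fun j _ => by ring

theorem schloemilch (n k : ℕ) (hk : 1 ≤ k) (hkn : k ≤ n) :
    s1 n k = ∑ r ∈ Finset.Icc (k - 1) (n - 1),
      (-1 : ℤ) ^ (n - 1 - r) * ((2 * n - 2 - r).choose (k - 1)) *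
        ((2 * n - k).choose (r + 1 - k)) * s2 (2 * n - 1 - k - r) (n - 1 - r) := by
  obtain ⟨p, rfl⟩ : ∃ p, k = p + 1 := ⟨k - 1, by omega⟩
  obtain ⟨m, rfl⟩ : ∃ m, n = m + p + 1 := ⟨n - (p + 1), by omega⟩
  rw [s1_add_one_eq_sum_s2]
  refine sum_nbij' (fun j => m + p - j) (fun r => m + p - r) ?_ ?_ ?_ ?_ fun j hj => ?_
  iterate 4 · intro x hx; simp only [mem_range, mem_Icc] at hx ⊢; omega
  rw [mem_range] at hj
  rw [show m + p + 1 - 1 - (m + p - j) = j by omega,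
    show 2 * (m + p + 1) - 2 - (m + p - j) = m + p + j by omega,
    show p + 1 - 1 = p by omega, show 2 * (m + p + 1) - (p + 1) = 2 * m + p + 1 by omega,
    show m + p - j + 1 - (p + 1) = m - j by omega,
    show 2 * (m + p + 1) - 1 - (p + 1) - (m + p - j) = m + j by omega]
end

section
/- For 1 ≤ k ≤ n, s₁(n,k) = Σ_{r=k−1}^{n−1} (−1)^{n−1−r} · binomial(2n−2−r, k−1) · S₂(2n−1−k−r, n−1−r), where S₂(m,j) denotes the associated Stirling numbers of the second kind (partitions of an m-set into j blocks each of size ≥ 2). -/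
open Finset MvPolynomial

/-- Associated Stirling numbers of the second kind: partitions into blocks of size ≥ 2. -/
def assocS2 (m j : ℕ) : ℤ :=
  ∑ r ∈ (ptypes m j).filter (fun r => ∀ i : Fin m, i.1 = 0 → r i = 0),
    ((m.factorial / bruDenom r : ℕ) : ℤ)

/-!
Record the block sizes of a set partition as `f : ℕ →₀ ℕ`, with `f x` blocks of size `x + 1`.
Then `assocS2 m j = m! * ∑ 1 / profileDenom f` over the profiles with `j` blocks, `m` elements and
no singletons. Writing `m + 2 = ∑ (x + 1) * f x` and reading the term of `x` as "the element
`m + 2` lies in a block of size `x + 1`" gives the recurrence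
`S₂(m+2, j+1) = (j+1) S₂(m+1, j+1) + (m+1) S₂(m, j)`: a block of size 2 is deleted (`x = 1`) or a
block of size `x + 1 ≥ 3` loses one element. With it and Pascal's rule, the alternating sum on the
right satisfies the recurrence `s₁(n+1, k+1) = s₁(n, k) - n s₁(n, k+1)` and the boundary values
of `s₁`.
-/

namespace AssocStirling

open Finsupp Nat

noncomputable def toProfile {m : ℕ} (r : Fin m → ℕ) : ℕ →₀ ℕ :=
  (equivFunOnFinite.symm r).embDomain Fin.valEmbedding

variable {m : ℕ}

lemma toProfile_injective : Function.Injective (toProfile (m := m)) :=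
  (embDomain_injective _).comp equivFunOnFinite.symm.injective

lemma toProfile_apply_val (r : Fin m → ℕ) (i : Fin m) : toProfile r i = r i :=
  embDomain_apply_self _ _ i

lemma toProfile_apply_of_le (r : Fin m → ℕ) {x : ℕ} (hx : m ≤ x) : toProfile r x = 0 :=
  embDomain_of_notMem_range _ _ _ (by simpa using hx)

lemma weight_toProfile (w : ℕ → ℕ) (r : Fin m → ℕ) :
    weight w (toProfile r) = ∑ i, r i * w i := by
  rw [weight_apply, toProfile, sum_embDomain, sum_fintype _ _ (by simp)]
  simp

lemma degree_toProfile (r : Fin m → ℕ) : degree (toProfile r) = ∑ i, r i := by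
  simp [degree_eq_weight_one, weight_toProfile]

def profileDenom (f : ℕ →₀ ℕ) : ℕ :=
  f.prod fun x c => c ! * (x + 1)! ^ c

lemma profileDenom_toProfile (r : Fin m → ℕ) : profileDenom (toProfile r) = bruDenom r := by
  rw [profileDenom, toProfile, prod_embDomain, prod_fintype _ _ (by simp)]
  simp [bruDenom]

lemma profileDenom_pos (f : ℕ →₀ ℕ) : 0 < profileDenom f :=
  Finset.prod_pos fun _ _ => by positivity

lemma profileDenom_dvd_factorial (f : ℕ →₀ ℕ) : profileDenom f ∣ (weight (· + 1) f)! := by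
  have hblock : ∀ x ∈ f.support, (f x)! * (x + 1)! ^ f x ∣ (f x * (x + 1))! := fun x _ =>
    ⟨uniformBell (f x) (x + 1), by rw [← uniformBell_mul_eq _ x.succ_ne_zero]; ring⟩
  exact (Finset.prod_dvd_prod_of_dvd _ _ hblock).trans (Nat.prod_factorial_dvd_factorial_sum _ _)

noncomputable def assocProfiles (m j : ℕ) : Finset (ℕ →₀ ℕ) :=
  ((ptypes m j).filter fun r => ∀ i : Fin m, i.1 = 0 → r i = 0).image toProfile

lemma mem_assocProfiles {j : ℕ} {f : ℕ →₀ ℕ} :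
    f ∈ assocProfiles m j ↔ degree f = j ∧ weight (· + 1) f = m ∧ f 0 = 0 := by
  simp only [assocProfiles, ptypes, Finset.mem_image, Finset.mem_filter, Fintype.mem_piFinset,
    Finset.mem_range]
  constructor
  · rintro ⟨r, ⟨⟨-, hdeg, hwt⟩, hr0⟩, rfl⟩
    refine ⟨by rw [degree_toProfile, hdeg], by simp [weight_toProfile, ← hwt, mul_comm], ?_⟩
    rcases Nat.eq_zero_or_pos m with rfl | hm
    · exact toProfile_apply_of_le r le_rfl
    · exact (toProfile_apply_val r ⟨0, hm⟩).trans (hr0 _ rfl)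
  · rintro ⟨hdeg, hwt, hf0⟩
    have hlt : ∀ x, f x ≠ 0 → x < m := fun x hx =>
      hwt ▸ le_weight_of_ne_zero' (· + 1) hx
    have hf : toProfile (fun i : Fin m => f i) = f := by
      ext x
      by_cases hx : x < m
      · exact toProfile_apply_val _ ⟨x, hx⟩
      · rw [toProfile_apply_of_le _ (not_lt.1 hx)]
        exact (not_imp_comm.1 (hlt x) hx).symm
    refine ⟨_, ⟨⟨fun i => ?_, ?_, ?_⟩, fun i hi => by simp [hi, hf0]⟩, hf⟩
    · exact Nat.lt_succ_of_le (hwt ▸ le_weight _ i.1.succ_ne_zero f)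
    · rw [← degree_toProfile, hf, hdeg]
    · have h := weight_toProfile (· + 1) fun i : Fin m => f i
      rw [hf, hwt] at h
      simpa [mul_comm] using h.symm

lemma assocS2_eq_factorial_mul_sum (m j : ℕ) :
    (assocS2 m j : ℚ) = m ! * ∑ f ∈ assocProfiles m j, ((profileDenom f : ℚ))⁻¹ := by
  have hsum : assocS2 m j = ∑ f ∈ assocProfiles m j, ((m ! / profileDenom f : ℕ) : ℤ) := by
    rw [assocProfiles, Finset.sum_image fun r _ r' _ h => toProfile_injective h]
    simp_rw [profileDenom_toProfile]
    rfl
  rw [hsum, Int.cast_sum, Finset.mul_sum]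
  refine Finset.sum_congr rfl fun f hf => ?_
  have hdvd := profileDenom_dvd_factorial f
  rw [(mem_assocProfiles.1 hf).2.1] at hdvd
  rw [Int.cast_natCast, Nat.cast_div hdvd (by exact_mod_cast (profileDenom_pos f).ne'),
    div_eq_mul_inv]

lemma exists_eq_add_single {ι : Type*} {f : ι →₀ ℕ} {x : ι} (hx : f x ≠ 0) :
    ∃ h, f = h + single x 1 :=
  ⟨_, (sub_add_single_one_cancel hx).symm⟩

lemma profileDenom_add_single (f : ℕ →₀ ℕ) (x : ℕ) :
    profileDenom (f + single x 1) = profileDenom f * ((f x + 1) * (x + 1)!) := by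
  have h0 : ∀ i : ℕ, (0 : ℕ)! * (i + 1)! ^ 0 = 1 := by simp
  rw [profileDenom, profileDenom, ← mul_prod_erase' _ x _ h0, ← mul_prod_erase' f x _ h0,
    erase_add, erase_single, add_zero, Finsupp.add_apply, single_eq_same, factorial_succ, pow_succ]
  ring

lemma add_single_mem_assocProfiles {h : ℕ →₀ ℕ} {x j : ℕ} (hx : x ≠ 0) :
    h + single x 1 ∈ assocProfiles m j ↔
      degree h + 1 = j ∧ weight (· + 1) h + (x + 1) = m ∧ h 0 = 0 := by
  simp [mem_assocProfiles, weight_single, hx]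

lemma cast_weight_eq_two_mul_add_sum {f : ℕ →₀ ℕ} (hf0 : f 0 = 0) :
    ((weight (· + 1) f : ℕ) : ℚ) = 2 * f 1 + ∑ x ∈ f.support with 2 ≤ x, ((x : ℚ) + 1) * f x := by
  have hsmall : ∑ x ∈ f.support with ¬2 ≤ x, ((x : ℚ) + 1) * f x = 2 * f 1 := by
    rw [Finset.sum_subset (s₂ := Finset.range 2) (fun x hx => by simp_all)
      (fun x _ hx => by simp_all)]
    norm_num [Finset.sum_range_succ, hf0]
  rw [← hsmall, Finset.sum_filter_not_add_sum_filter]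
  simp [weight_apply, Finsupp.sum, mul_comm]

lemma two_mul_degree_le_weight {f : ℕ →₀ ℕ} (hf0 : f 0 = 0) :
    2 * degree f ≤ weight (· + 1) f := by
  rw [degree_apply, weight_apply, Finsupp.sum, Finset.mul_sum]
  refine Finset.sum_le_sum fun x hx => ?_
  have hx0 : x ≠ 0 := by rintro rfl; exact Finsupp.mem_support_iff.1 hx hf0
  rw [smul_eq_mul, mul_comm]
  exact Nat.mul_le_mul_left _ (by omega)

lemma assocS2_eq_zero {m j : ℕ}
    (h : ∀ f : ℕ →₀ ℕ, degree f = j → weight (· + 1) f = m → f 0 = 0 → False) :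
    assocS2 m j = 0 := by
  have hempty : assocProfiles m j = ∅ := Finset.eq_empty_of_forall_notMem fun f hf =>
    h f (mem_assocProfiles.1 hf).1 (mem_assocProfiles.1 hf).2.1 (mem_assocProfiles.1 hf).2.2
  have hq := assocS2_eq_factorial_mul_sum m j
  rw [hempty, Finset.sum_empty, mul_zero] at hq
  exact_mod_cast hq

lemma assocS2_zero_zero : assocS2 0 0 = 1 := by
  decide

lemma assocS2_zero_right {m : ℕ} (hm : m ≠ 0) : assocS2 m 0 = 0 :=
  assocS2_eq_zero fun f hdeg hwt _ => hm (by rw [← hwt, (degree_eq_zero_iff f).1 hdeg, map_zero])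

lemma assocS2_eq_zero_of_lt {m j : ℕ} (h : m < 2 * j) : assocS2 m j = 0 :=
  assocS2_eq_zero fun f hdeg hwt hf0 => by
    have := two_mul_degree_le_weight hf0
    omega

/-- Deleting a block of size 2. -/
lemma sum_two_mul_inv_profileDenom (m j : ℕ) :
    ∑ f ∈ assocProfiles (m + 2) (j + 1), 2 * (f 1 : ℚ) * ((profileDenom f : ℚ))⁻¹
      = ∑ g ∈ assocProfiles m j, ((profileDenom g : ℚ))⁻¹ := by
  rw [← Finset.sum_filter_of_ne (p := fun f => f 1 ≠ 0) fun f _ h => by contrapose! h; simp [h]]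
  refine Finset.sum_nbij' (· - single 1 1) (· + single 1 1) ?_ ?_ ?_ ?_ ?_
  · intro f hf
    obtain ⟨hf, hf1⟩ := Finset.mem_filter.1 hf
    obtain ⟨h, rfl⟩ := exists_eq_add_single hf1
    obtain ⟨hdeg, hwt, h0⟩ := (add_single_mem_assocProfiles one_ne_zero).1 hf
    simp only [add_tsub_cancel_right, mem_assocProfiles]
    exact ⟨by omega, by omega, h0⟩
  · intro g hg
    obtain ⟨hdeg, hwt, h0⟩ := mem_assocProfiles.1 hg
    simp only [Finset.mem_filter, add_single_mem_assocProfiles one_ne_zero]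
    exact ⟨⟨by omega, by omega, h0⟩, by simp⟩
  · intro f hf
    exact sub_add_single_one_cancel (Finset.mem_filter.1 hf).2
  · intro g _
    exact add_tsub_cancel_right g _
  · intro f hf
    obtain ⟨h, rfl⟩ := exists_eq_add_single (Finset.mem_filter.1 hf).2
    have hD := (profileDenom_pos h).ne'
    simp only [add_tsub_cancel_right, profileDenom_add_single, Finsupp.add_apply, single_eq_same]
    push_cast
    field_simp
    norm_num

/-- Shrinking a block of size `x + 1 ≥ 3` to size `x`. -/
lemma sum_sum_mul_inv_profileDenom (m j : ℕ) :
    ∑ f ∈ assocProfiles (m + 2) (j + 1), ∑ x ∈ f.support with 2 ≤ x,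
        ((x : ℚ) + 1) * f x * ((profileDenom f : ℚ))⁻¹
      = ∑ g ∈ assocProfiles (m + 1) (j + 1), ∑ y ∈ g.support,
          (g y : ℚ) * ((profileDenom g : ℚ))⁻¹ := by
  rw [Finset.sum_sigma', Finset.sum_sigma']
  refine Finset.sum_nbij' (fun p => ⟨p.1 - single p.2 1 + single (p.2 - 1) 1, p.2 - 1⟩)
    (fun q => ⟨q.1 - single q.2 1 + single (q.2 + 1) 1, q.2 + 1⟩) ?_ ?_ ?_ ?_ ?_
  · rintro ⟨f, x⟩ hp
    simp only [Finset.mem_sigma, Finset.mem_filter, Finsupp.mem_support_iff] at hp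
    obtain ⟨hf, hfx, hx⟩ := hp
    obtain ⟨h, rfl⟩ := exists_eq_add_single hfx
    obtain ⟨hdeg, hwt, h0⟩ := (add_single_mem_assocProfiles (by omega)).1 hf
    simp only [Finset.mem_sigma, add_tsub_cancel_right, add_single_mem_assocProfiles
      (show x - 1 ≠ 0 by omega), Finsupp.mem_support_iff]
    exact ⟨⟨by omega, by omega, h0⟩, by simp⟩
  · rintro ⟨g, y⟩ hq
    simp only [Finset.mem_sigma, Finsupp.mem_support_iff] at hq
    obtain ⟨hg, hgy⟩ := hq
    have hy : y ≠ 0 := by rintro rfl; exact hgy (mem_assocProfiles.1 hg).2.2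
    obtain ⟨h, rfl⟩ := exists_eq_add_single hgy
    obtain ⟨hdeg, hwt, h0⟩ := (add_single_mem_assocProfiles hy).1 hg
    simp only [Finset.mem_sigma, Finset.mem_filter, add_tsub_cancel_right,
      add_single_mem_assocProfiles y.succ_ne_zero, Finsupp.mem_support_iff]
    exact ⟨⟨by omega, by omega, h0⟩, by simp, by omega⟩
  · rintro ⟨f, x⟩ hp
    simp only [Finset.mem_sigma, Finset.mem_filter, Finsupp.mem_support_iff] at hp
    obtain ⟨-, hfx, hx⟩ := hp
    simp only [add_tsub_cancel_right, Nat.sub_add_cancel (by omega : 1 ≤ x),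
      sub_add_single_one_cancel hfx]
  · rintro ⟨g, y⟩ hq
    simp only [Finset.mem_sigma, Finsupp.mem_support_iff] at hq
    simp only [add_tsub_cancel_right, sub_add_single_one_cancel hq.2]
  · rintro ⟨f, x⟩ hp
    simp only [Finset.mem_sigma, Finset.mem_filter, Finsupp.mem_support_iff] at hp
    obtain ⟨-, hfx, hx⟩ := hp
    obtain ⟨h, rfl⟩ := exists_eq_add_single hfx
    obtain ⟨y, rfl⟩ : ∃ y, x = y + 1 := ⟨x - 1, by omega⟩
    have hD := (profileDenom_pos h).ne'
    simp only [add_tsub_cancel_right, profileDenom_add_single,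
      Finsupp.add_apply, single_eq_same, factorial_succ (y + 1)]
    push_cast
    field_simp

theorem assocS2_succ_succ (m j : ℕ) :
    assocS2 (m + 2) (j + 1) = (j + 1) * assocS2 (m + 1) (j + 1) + (m + 1) * assocS2 m j := by
  have hsplit : ∀ f ∈ assocProfiles (m + 2) (j + 1),
      ((m : ℚ) + 2) * ((profileDenom f : ℚ))⁻¹ = 2 * (f 1 : ℚ) * ((profileDenom f : ℚ))⁻¹ +
        ∑ x ∈ f.support with 2 ≤ x, ((x : ℚ) + 1) * f x * ((profileDenom f : ℚ))⁻¹ := by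
    intro f hf
    obtain ⟨-, hwt, hf0⟩ := mem_assocProfiles.1 hf
    have hm : ((m : ℚ) + 2) = ((m + 2 : ℕ) : ℚ) := by push_cast; ring
    rw [← Finset.sum_mul, ← add_mul, ← cast_weight_eq_two_mul_add_sum hf0, hwt, hm]
  have hcount : ∀ g ∈ assocProfiles (m + 1) (j + 1),
      ∑ y ∈ g.support, (g y : ℚ) * ((profileDenom g : ℚ))⁻¹
        = ((j : ℚ) + 1) * ((profileDenom g : ℚ))⁻¹ := by
    intro g hg
    rw [← Finset.sum_mul, ← Nat.cast_sum, ← degree_apply, (mem_assocProfiles.1 hg).1]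
    push_cast
    rfl
  qify
  rw [assocS2_eq_factorial_mul_sum, assocS2_eq_factorial_mul_sum, assocS2_eq_factorial_mul_sum]
  calc ((m + 2)! : ℚ) * ∑ f ∈ assocProfiles (m + 2) (j + 1), ((profileDenom f : ℚ))⁻¹
      = (m + 1)! * ∑ f ∈ assocProfiles (m + 2) (j + 1),
          ((m : ℚ) + 2) * ((profileDenom f : ℚ))⁻¹ := by
        rw [← Finset.mul_sum, factorial_succ (m + 1)]
        push_cast
        ring
    _ = (m + 1)! * (∑ g ∈ assocProfiles m j, ((profileDenom g : ℚ))⁻¹ +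
          ((j : ℚ) + 1) * ∑ g ∈ assocProfiles (m + 1) (j + 1), ((profileDenom g : ℚ))⁻¹) := by
        rw [Finset.sum_congr rfl hsplit, Finset.sum_add_distrib, sum_two_mul_inv_profileDenom,
          sum_sum_mul_inv_profileDenom, Finset.sum_congr rfl hcount, Finset.mul_sum]
    _ = _ := by
        rw [factorial_succ m]
        push_cast
        ring

lemma s1_eq_zero_of_lt : ∀ {n k : ℕ}, n < k → s1 n k = 0
  | 0, _ + 1, _ => rfl
  | _ + 1, _ + 1, h => by
    rw [s1, s1_eq_zero_of_lt (by omega), s1_eq_zero_of_lt (by omega)]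
    ring

lemma s1_self : ∀ n : ℕ, s1 n n = 1
  | 0 => rfl
  | n + 1 => by
    rw [s1, s1_self n, s1_eq_zero_of_lt n.lt_succ_self]
    ring

/-- The right-hand side of the theorem for `k = t + 1`, `n = t + 1 + d`, reindexed by
`j = n - 1 - r`. -/
def altSum (t d : ℕ) : ℤ :=
  ∑ j ∈ range (d + 1), (-1) ^ j * ((t + d + j).choose t : ℤ) * assocS2 (d + j) j

lemma sum_range_succ_assocS2_succ (t d : ℕ) :
    ∑ j ∈ range (d + 2), (-1 : ℤ) ^ j * ((t + d + j).choose t : ℤ) * assocS2 (d + 1 + j) j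
      = -((t : ℤ) + d + 1) * altSum t d := by
  set T : ℕ → ℤ := fun j => (-1) ^ j * ((t + d + j).choose t : ℤ) * assocS2 (d + j) j with hT
  have hstep : ∀ j, (-1 : ℤ) ^ (j + 1) * ((t + d + (j + 1)).choose t : ℤ) *
      assocS2 (d + 1 + (j + 1)) (j + 1) = (j + 1) * T (j + 1) - ((t : ℤ) + d + j + 1) * T j := by
    intro j
    have hc : ((t + d + j).choose t : ℤ) * (t + d + j + 1)
        = ((t + d + j + 1).choose t : ℤ) * (d + j + 1) := by
      have h := Nat.choose_mul_succ_eq (t + d + j) t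
      rw [show t + d + j + 1 - t = d + j + 1 by omega] at h
      exact_mod_cast h
    rw [show d + 1 + (j + 1) = d + j + 2 by ring, assocS2_succ_succ]
    simp only [hT]
    rw [show t + d + (j + 1) = t + d + j + 1 by ring, show d + (j + 1) = d + j + 1 by ring]
    push_cast
    linear_combination (-1 : ℤ) ^ j * assocS2 (d + j) j * hc
  have htop : T (d + 1) = 0 := by
    rw [hT]
    simp [assocS2_eq_zero_of_lt (by omega : d + (d + 1) < 2 * (d + 1))]
  calc _ = ∑ j ∈ range (d + 1), ((j + 1) * T (j + 1) - ((t : ℤ) + d + j + 1) * T j) := by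
        rw [Finset.sum_range_succ', assocS2_zero_right (by omega)]
        simp only [mul_zero, add_zero]
        exact Finset.sum_congr rfl fun j _ => hstep j
    _ = ∑ j ∈ range (d + 1), ((j : ℤ) * T j - ((t : ℤ) + d + j + 1) * T j) := by
        rw [Finset.sum_sub_distrib, Finset.sum_sub_distrib]
        congr 1
        have := Finset.sum_range_succ' (fun j => (j : ℤ) * T j) (d + 1)
        rw [Finset.sum_range_succ, htop] at this
        push_cast at this
        linarith
    _ = _ := by
        rw [altSum, Finset.mul_sum]
        exact Finset.sum_congr rfl fun j _ => by ring

lemma altSum_zero_right (t : ℕ) : altSum t 0 = 1 := by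
  simp [altSum, assocS2_zero_zero]

lemma altSum_zero_succ (d : ℕ) : altSum 0 (d + 1) = -((d : ℤ) + 1) * altSum 0 d := by
  simpa [altSum] using sum_range_succ_assocS2_succ 0 d

lemma altSum_succ_succ (t d : ℕ) :
    altSum (t + 1) (d + 1) = altSum t (d + 1) - ((t : ℤ) + d + 2) * altSum (t + 1) d := by
  have hpascal : ∀ j, ((t + 1 + (d + 1) + j).choose (t + 1) : ℤ)
      = (t + (d + 1) + j).choose t + (t + 1 + d + j).choose (t + 1) := by
    intro j
    rw [show t + 1 + (d + 1) + j = (t + d + 1 + j) + 1 by ring, Nat.choose_succ_succ,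
      show t + (d + 1) + j = t + d + 1 + j by ring, show t + 1 + d + j = t + d + 1 + j by ring]
    push_cast
    rfl
  have h := sum_range_succ_assocS2_succ (t + 1) d
  rw [altSum, altSum]
  simp only [hpascal, mul_add, add_mul, Finset.sum_add_distrib]
  rw [show d + 1 + 1 = d + 2 by ring, h]
  push_cast
  ring

lemma s1_eq_altSum : ∀ t d : ℕ, s1 (t + 1 + d) (t + 1) = altSum t d
  | t, 0 => by rw [altSum_zero_right, add_zero, s1_self]
  | 0, d + 1 => by
    rw [altSum_zero_succ, ← s1_eq_altSum 0 d, add_comm 1, add_comm 1, s1, s1.eq_3]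
    push_cast
    ring
  | t + 1, d + 1 => by
    rw [altSum_succ_succ, ← s1_eq_altSum t (d + 1), ← s1_eq_altSum (t + 1) d,
      show t + 1 + 1 + (d + 1) = t + 1 + (d + 1) + 1 by ring, s1,
      show t + 1 + 1 + d = t + 1 + (d + 1) by ring]
    push_cast
    ring

end AssocStirling

theorem s1_eq_sum_assocS2 (n k : ℕ) (hk : 1 ≤ k) (hkn : k ≤ n) :
    s1 n k = ∑ r ∈ Finset.Icc (k - 1) (n - 1),
      (-1 : ℤ) ^ (n - 1 - r) * ((2 * n - 2 - r).choose (k - 1)) *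
        assocS2 (2 * n - 1 - k - r) (n - 1 - r) := by
  obtain ⟨t, rfl⟩ : ∃ t, k = t + 1 := ⟨k - 1, by omega⟩
  obtain ⟨d, rfl⟩ : ∃ d, n = t + 1 + d := ⟨n - (t + 1), by omega⟩
  rw [AssocStirling.s1_eq_altSum, AssocStirling.altSum]
  refine Finset.sum_nbij' (fun j => t + d - j) (fun r => t + d - r) ?_ ?_ ?_ ?_ ?_ <;>
    intro j hj <;> simp only [Finset.mem_range, Finset.mem_Icc] at hj ⊢
  iterate 4 omega
  rw [show t + 1 + d - 1 - (t + d - j) = j by omega,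
    show 2 * (t + 1 + d) - 2 - (t + d - j) = t + d + j by omega,
    show 2 * (t + 1 + d) - 1 - (t + 1) - (t + d - j) = d + j by omega, Nat.add_sub_cancel]
end

section
/- For every (2n−1−k, n−1)-partition type (r₁,…,r_{n−k+1}) with 1 ≤ k ≤ n, the identity binomial(2n−1−k, r₁) · σ(r₁,…) = (−1)^{n−1−r₁} · binomial(2n−2−r₁, k−1) · β(r₁,…) holds, where σ(r₁,r₂,…) = (−1)^{n−1−r₁}·(2n−2−r₁)!/((k−1)!·r₂!·r₃!⋯·(2!)^{r₂}(3!)^{r₃}⋯) and β(r₁,r₂,…) = (Σi·rᵢ)!/(r₁!r₂!⋯·(1!)^{r₁}(2!)^{r₂}⋯). -/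
open Finset MvPolynomial

lemma filter_zero_eq {m : ℕ} (hm : 0 < m) :
    Finset.univ.filter (fun i : Fin m => i.1 = 0) = {⟨0, hm⟩} := by
  ext i; simp [Fin.ext_iff]

lemma prod_fact_filter_zero {m : ℕ} (r : Fin m → ℕ) :
    ∏ i ∈ Finset.univ.filter (fun i : Fin m => i.1 = 0), (r i).factorial
      = (firstEntry r).factorial := by
  unfold firstEntry
  cases m with
  | zero => simp
  | succ m => rw [filter_zero_eq (Nat.succ_pos m)]; simp

lemma bruDenom_split {m : ℕ} (r : Fin m → ℕ) :
    bruDenom r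
      = (firstEntry r).factorial *
        ∏ i ∈ Finset.univ.filter (fun i : Fin m => 1 ≤ i.1),
          (r i).factorial * ((i.1 + 1).factorial) ^ (r i) := by
  rw [bruDenom,
    ← Finset.prod_filter_mul_prod_filter_not univ (fun i : Fin m => i.1 = 0)]
  congr 1
  · rw [← prod_fact_filter_zero r]
    apply Finset.prod_congr rfl
    intro i hi
    simp only [Finset.mem_filter] at hi
    rw [hi.2]
    simp
  · apply Finset.prod_congr _ (fun _ _ => rfl)
    apply Finset.filter_congr
    intro i _
    omega

theorem stirling_bruno_coeff_identity (n k : ℕ) (hk : 1 ≤ k) (hkn : k ≤ n)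
    (r : Fin (2 * n - 1 - k) → ℕ) (hr : r ∈ ptypes (2 * n - 1 - k) (n - 1)) :
    ((2 * n - 1 - k).choose (firstEntry r) : ℚ) *
        ((-1 : ℚ) ^ (n - 1 - firstEntry r) *
          ((2 * n - 2 - firstEntry r).factorial : ℚ) /
            (((k - 1).factorial : ℚ) *
              ((∏ i ∈ Finset.univ.filter (fun i : Fin (2 * n - 1 - k) => 1 ≤ i.1),
                  (r i).factorial * ((i.1 + 1).factorial) ^ (r i) : ℕ) : ℚ))) =
      (-1 : ℚ) ^ (n - 1 - firstEntry r) *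
        ((2 * n - 2 - firstEntry r).choose (k - 1) : ℚ) *
        (((∑ i, (i.1 + 1) * r i).factorial : ℚ) / ((bruDenom r : ℕ) : ℚ)) := by
  
  have hr' := hr
  simp only [ptypes, Finset.mem_filter] at hr'
  obtain ⟨-, h1, h2⟩ := hr'
  have hfe : firstEntry r ≤ n - 1 := by
    rw [← h1]
    exact Finset.sum_le_sum_of_subset (Finset.filter_subset _ _)
  have he1 : firstEntry r ≤ 2 * n - 1 - k := by omega
  have he2 : k - 1 ≤ 2 * n - 2 - firstEntry r := by omega
  have hsub : 2 * n - 1 - k - firstEntry r = 2 * n - 2 - firstEntry r - (k - 1) := by omega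
  set e := firstEntry r with hE
  set P := ∏ i ∈ Finset.univ.filter (fun i : Fin (2 * n - 1 - k) => 1 ≤ i.1),
      (r i).factorial * ((i.1 + 1).factorial) ^ (r i) with hP
  have hPpos : 0 < P := Finset.prod_pos fun i _ => by positivity
  have hbd : bruDenom r = e.factorial * P := bruDenom_split r
  rw [h2, Nat.cast_choose ℚ he1, Nat.cast_choose ℚ he2, hbd, hsub, Nat.cast_mul]
  have f1 : ((2 * n - 1 - k).factorial : ℚ) ≠ 0 := Nat.cast_ne_zero.2 (Nat.factorial_ne_zero _)
  have f2 : (e.factorial : ℚ) ≠ 0 := Nat.cast_ne_zero.2 (Nat.factorial_ne_zero _)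
  have f3 : ((2 * n - 2 - e - (k - 1)).factorial : ℚ) ≠ 0 :=
    Nat.cast_ne_zero.2 (Nat.factorial_ne_zero _)
  have f4 : ((k - 1).factorial : ℚ) ≠ 0 := Nat.cast_ne_zero.2 (Nat.factorial_ne_zero _)
  have f5 : ((2 * n - 2 - e).factorial : ℚ) ≠ 0 := Nat.cast_ne_zero.2 (Nat.factorial_ne_zero _)
  have f6 : (P : ℚ) ≠ 0 := Nat.cast_ne_zero.2 hPpos.ne'
  field_simp
end

section
/- For 1 ≤ k ≤ n, the multivariate Stirling polynomial of the first kind S_{n,k}, defined by the recurrence S_{n+1,k} = −(2n−1)·X₂·S_{n,k} + X₁·(S_{n,k−1} + Σ_{j=1}^{n−k+1} X_{j+1}·∂S_{n,k}/∂X_j) with S_{1,1}=1, S_{n,0}=0 (n>0), S_{n,k}=0 (k>n), is homogeneous of degree n−1 and isobaric of degree 2n−1−k (i.e., every monomial X₁^{r₁}⋯X_{n−k+1}^{r_{n−k+1}} appearing in S_{n,k} satisfies Σrᵢ = n−1 and Σi·rᵢ = 2n−1−k). -/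
open Finset MvPolynomial

/-!
Give the variable `X i` the integer weight `a + b * i`. In the recurrence, multiplying by `X 1`,
by `X 0` after lowering `k`, and applying `X 0 * X j * ∂/∂X (j-1)` all raise the weight by the same
amount, so `Spoly n k` is weighted homogeneous of weight `a * (n - 1) + b * (n - k)` for every `n`
and `k`. Taking `(a, b) = (1, 0)` gives the degree and `(1, 1)` the isobaric weight. With integer
weights this formula needs no case distinction at `k = 0` or `k > n`, where `Spoly n k = 0`.
-/

lemma isWeightedHomogeneous_spoly (a b : ℤ) : ∀ n k : ℕ,
    (Spoly n k).IsWeightedHomogeneous (fun i : ℕ => a + b * i) (a * (n - 1) + b * (n - k))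
  | 0, k => by simpa [Spoly] using isWeightedHomogeneous_zero ℤ _ _
  | 1, k => by
    unfold Spoly
    split_ifs with hk
    · subst hk; simpa using isWeightedHomogeneous_one ℤ _
    · exact isWeightedHomogeneous_zero ℤ _ _
  | n + 2, k => by
    unfold Spoly
    split_ifs with hk
    · exact isWeightedHomogeneous_zero ℤ _ _
    have hS := isWeightedHomogeneous_spoly a b (n + 1) k
    have hS' := isWeightedHomogeneous_spoly a b (n + 1) (k - 1)
    have hX (i : ℕ) := isWeightedHomogeneous_X ℤ (fun i : ℕ => a + b * i) i
    have hk' : ((k - 1 : ℕ) : ℤ) = k - 1 := by omega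
    refine .add ?_ ?_
    · convert ((isWeightedHomogeneous_C _ _).mul (hX 1)).mul hS using 1
      push_cast; ring
    · convert (hX 0).mul (hS'.add (.sum _ _ _ fun j hj => ?_)) using 1
      · push_cast; rw [hk']; ring
      · have hj' : ((j - 1 : ℕ) : ℤ) = j - 1 := by simp at hj; omega
        convert (hX j).mul (hS.pderiv (n' := a * n + b * (n + 1 - k) - a - b * (j - 1)) ?_) using 1
        · rw [hk']; push_cast; ring
        · rw [hj']; push_cast; ring

theorem spoly_homogeneous_isobaric_general (n k : ℕ)
    (m : ℕ →₀ ℕ) (hm : m ∈ (Spoly n k).support) :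
    (∑ i ∈ m.support, m i) = n - 1 ∧ (∑ i ∈ m.support, (i + 1) * m i) = 2 * n - 1 - k := by
  have hweight (a b : ℤ) :
      ∑ i ∈ m.support, (m i : ℤ) * (a + b * i) = a * (n - 1) + b * (n - k) := by
    simpa [Finsupp.weight_apply, Finsupp.sum] using
      isWeightedHomogeneous_spoly a b n k (mem_support_iff.mp hm)
  have hdeg : ((∑ i ∈ m.support, m i : ℕ) : ℤ) = n - 1 := by
    simpa using hweight 1 0
  have hwt : ((∑ i ∈ m.support, (i + 1) * m i : ℕ) : ℤ) = (n - 1) + (n - k) := by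
    simpa [mul_comm, add_comm] using hweight 1 1
  omega

theorem spoly_homogeneous_isobaric (n k : ℕ) (hk : 1 ≤ k) (hkn : k ≤ n)
    (m : ℕ →₀ ℕ) (hm : m ∈ (Spoly n k).support) :
    (∑ i ∈ m.support, m i) = n - 1 ∧ (∑ i ∈ m.support, (i + 1) * m i) = 2 * n - 1 - k :=
  spoly_homogeneous_isobaric_general n k m hm
end

section
/- Evaluating the multivariate Stirling polynomial of the first kind at all variables equal to 1 gives the signed Stirling numbers of the first kind: S_{n,k}(1,…,1) = s₁(n,k) = (−1)^{n−k}·c(n,k), where c(n,k) is the number of permutations of n elements with exactly k cycles, for all 1 ≤ k ≤ n. -/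
open Finset MvPolynomial

/-!
At the all-ones point both `X j` and `X (j + 1)` evaluate to 1, so the sum in the recurrence
evaluates to `∑ j, ∂S_{n,k}/∂X_j (1, …, 1)`. Since `S_{n,k}` is homogeneous of degree `n - 1`
and involves only `X₁, …, X_{n-k+1}` (exactly the range of that sum), Euler's identity turns
this into `(n - 1) S_{n,k}(1, …, 1)`. Hence `S_{n+1,k}(1) = S_{n,k-1}(1) - n S_{n,k}(1)`, which is
the recurrence of the signed Stirling numbers of the first kind.
-/

namespace MvPolynomial

variable {R σ : Type*} [CommSemiring R]

theorem vars_pderiv_subset (i : σ) (p : MvPolynomial σ R) : (pderiv i p).vars ⊆ p.vars := by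
  intro j hj
  obtain ⟨m, hm, hjm⟩ := (mem_vars_iff_mem_support j).mp hj
  rw [mem_support_iff, coeff_pderiv] at hm
  refine (mem_vars_iff_mem_support j).mpr
    ⟨m + Finsupp.single i 1, mem_support_iff.mpr (left_ne_zero_of_mul hm), ?_⟩
  rw [Finsupp.mem_support_iff] at hjm ⊢
  simp [hjm]

theorem pderiv_mem_supported {s : Set σ} {p : MvPolynomial σ R} (hp : p ∈ supported R s) (i : σ) :
    pderiv i p ∈ supported R s := by
  rw [mem_supported] at hp ⊢
  exact (Finset.coe_subset.mpr (vars_pderiv_subset i p)).trans hp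

theorem IsHomogeneous.X_mul_pderiv {p : MvPolynomial σ R} {n : ℕ} (hp : p.IsHomogeneous n)
    (i j : σ) : (X j * pderiv i p).IsHomogeneous n := by
  cases n with
  | zero =>
    rw [← totalDegree_zero_iff_isHomogeneous, totalDegree_eq_zero_iff_eq_C] at hp
    rw [hp, pderiv_C, mul_zero]
    exact isHomogeneous_zero _ _ _
  | succ n => simpa [add_comm] using (isHomogeneous_X R j).mul hp.pderiv

theorem IsHomogeneous.sum_X_mul_pderiv_of_vars_subset {p : MvPolynomial σ R} {n : ℕ}
    (hp : p.IsHomogeneous n) {T : Finset σ} (hT : p.vars ⊆ T) :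
    ∑ i ∈ T, X i * pderiv i p = n • p := by
  obtain ⟨q, rfl⟩ := exists_rename_eq_of_vars_subset_range p ((↑) : T → σ)
    Subtype.val_injective fun i hi => ⟨⟨i, hT hi⟩, rfl⟩
  have hq : q.IsHomogeneous n :=
    (IsHomogeneous.rename_isHomogeneous_iff Subtype.val_injective).mp hp
  rw [← Finset.sum_coe_sort T]
  simp_rw [pderiv_rename Subtype.val_injective, ← rename_X, ← map_mul, ← map_sum,
    hq.sum_X_mul_pderiv, map_nsmul]

theorem IsHomogeneous.eval_one_sum_X_succ_mul_pderiv
    {p : MvPolynomial ℕ R} {d M : ℕ} (hp : p.IsHomogeneous d) (hM : p.vars ⊆ range M) :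
    eval (fun _ => 1) (∑ i ∈ range M, X (i + 1) * pderiv i p) = d * eval (fun _ => 1) p := by
  calc _ = eval (fun _ => 1) (∑ i ∈ range M, X i * pderiv i p) := by
        simp only [map_sum, eval_mul, eval_X]
    _ = _ := by rw [hp.sum_X_mul_pderiv_of_vars_subset hM, nsmul_eq_mul, eval_mul, map_natCast]

end MvPolynomial

theorem Finset.sum_Icc_one_eq_sum_range {M : Type*} [AddCommMonoid M] (f : ℕ → M) (n : ℕ) :
    ∑ j ∈ Icc 1 n, f j = ∑ i ∈ range n, f (i + 1) := by
  rw [range_eq_Ico, sum_Ico_add' f 0 n 1, zero_add, Ico_add_one_right_eq_Icc]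

theorem spoly_add_two_add_one (n k : ℕ) :
    Spoly (n + 2) (k + 1) = C (-(2 * (n : ℤ) + 1)) * X 1 * Spoly (n + 1) (k + 1)
      + X 0 * (Spoly (n + 1) k
        + ∑ i ∈ range (n - k + 1), X (i + 1) * pderiv i (Spoly (n + 1) (k + 1))) := by
  rw [Spoly, if_neg k.succ_ne_zero, sum_Icc_one_eq_sum_range]
  simp only [Nat.add_sub_cancel, Nat.add_sub_add_right]

theorem spoly_eq_zero_of_lt : ∀ {n k : ℕ}, n < k → Spoly n k = 0
  | 0, _, _ => rfl
  | 1, k, h => if_neg (by omega)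
  | n + 2, k + 1, h => by
    rw [spoly_add_two_add_one, spoly_eq_zero_of_lt (by omega : n + 1 < k + 1),
      spoly_eq_zero_of_lt (by omega : n + 1 < k)]
    simp

theorem spoly_isHomogeneous : ∀ n k : ℕ, (Spoly (n + 1) k).IsHomogeneous n
  | 0, k => by
    unfold Spoly
    split_ifs
    · exact isHomogeneous_one _ _
    · exact isHomogeneous_zero _ _ _
  | n + 1, 0 => isHomogeneous_zero _ _ _
  | n + 1, k + 1 => by
    have hS := spoly_isHomogeneous n (k + 1)
    rw [spoly_add_two_add_one]
    refine .add ?_ ?_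
    · have h := ((isHomogeneous_C ℕ (-(2 * (n : ℤ) + 1))).mul (isHomogeneous_X ℤ 1)).mul hS
      rwa [zero_add, Nat.add_comm 1 n] at h
    · have hsum : (∑ i ∈ range (n - k + 1),
          X (i + 1) * pderiv i (Spoly (n + 1) (k + 1))).IsHomogeneous n :=
        .sum _ _ _ fun i _ => hS.X_mul_pderiv i (i + 1)
      have h := (isHomogeneous_X ℤ 0).mul ((spoly_isHomogeneous n k).add hsum)
      rwa [Nat.add_comm 1 n] at h

theorem spoly_mem_supported : ∀ n k : ℕ, Spoly n k ∈ supported ℤ {i | i + k ≤ n}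
  | 0, _ => zero_mem _
  | 1, k => by
    unfold Spoly
    split_ifs
    · exact one_mem _
    · exact zero_mem _
  | n + 2, 0 => zero_mem _
  | n + 2, k + 1 => by
    have hX {i : ℕ} (hi : i + (k + 1) ≤ n + 2) : X i ∈ supported ℤ {i | i + (k + 1) ≤ n + 2} :=
      X_mem_supported.mpr hi
    have hmono {m : ℕ} (hm : k ≤ m) :
        supported ℤ {i | i + m ≤ n + 1} ≤ supported ℤ {i | i + (k + 1) ≤ n + 2} :=
      supported_mono fun i hi => by simp only [Set.mem_ofPred_eq] at hi ⊢; omega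
    have hprev := hmono le_rfl (spoly_mem_supported (n + 1) k)
    rcases lt_trichotomy k (n + 1) with hlt | rfl | hgt
    · have hS := spoly_mem_supported (n + 1) (k + 1)
      rw [spoly_add_two_add_one]
      refine add_mem (mul_mem (mul_mem (algebraMap_mem _ _) (hX (by omega))) (hmono k.le_succ hS))
        (mul_mem (hX (by omega)) (add_mem hprev (sum_mem fun i hi => ?_)))
      rw [mem_range] at hi
      exact mul_mem (hX (by omega)) (hmono k.le_succ (pderiv_mem_supported hS i))
    · rw [spoly_add_two_add_one, spoly_eq_zero_of_lt (Nat.lt_succ_self _)]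
      simpa using mul_mem (hX (by omega)) hprev
    · rw [spoly_eq_zero_of_lt (by omega)]
      exact zero_mem _

theorem eval_one_spoly_add_two_add_one (n k : ℕ) :
    eval (fun _ => 1) (Spoly (n + 2) (k + 1)) =
      eval (fun _ => 1) (Spoly (n + 1) k)
        - (n + 1) * eval (fun _ => 1) (Spoly (n + 1) (k + 1)) := by
  have hvars : (Spoly (n + 1) (k + 1)).vars ⊆ range (n - k + 1) := fun i hi => by
    have := mem_supported.mp (spoly_mem_supported (n + 1) (k + 1)) hi
    simp only [Set.mem_ofPred_eq] at this
    rw [mem_range]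
    omega
  rw [spoly_add_two_add_one]
  simp only [eval_add, eval_mul, eval_C, eval_X, one_mul, mul_one,
    (spoly_isHomogeneous n (k + 1)).eval_one_sum_X_succ_mul_pderiv hvars]
  ring

theorem eval_one_spoly : ∀ n k : ℕ, eval (fun _ => 1) (Spoly (n + 1) k) = s1 (n + 1) k
  | 0, 0 | 0, 1 | 0, k + 2 => by simp [Spoly, s1]
  | n + 1, 0 => by simp [Spoly, s1]
  | n + 1, k + 1 => by
    rw [eval_one_spoly_add_two_add_one, eval_one_spoly n k, eval_one_spoly n (k + 1),
      s1_succ_succ (n + 1) k]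
    push_cast
    ring

theorem neg_one_pow_mul_s1 : ∀ n k : ℕ, (-1) ^ k * s1 n k = (-1) ^ n * cyc n k
  | 0, 0 | 0, _ + 1 | _ + 1, 0 => by simp [s1, cyc]
  | n + 1, k + 1 => by
    rw [s1_succ_succ, cyc, Nat.cast_add, Nat.cast_mul]
    linear_combination -neg_one_pow_mul_s1 n k - n * neg_one_pow_mul_s1 n (k + 1)

theorem s1_eq_neg_one_pow_mul_cyc {n k : ℕ} (h : k ≤ n) : s1 n k = (-1) ^ (n - k) * cyc n k := by
  obtain ⟨d, rfl⟩ := Nat.exists_eq_add_of_le h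
  have := neg_one_pow_mul_s1 (k + d) k
  rw [pow_add, mul_assoc] at this
  rw [Nat.add_sub_cancel_left]
  exact mul_left_cancel₀ (pow_ne_zero _ (by norm_num)) this

theorem spoly_eval_one (n k : ℕ) (hk : 1 ≤ k) (hkn : k ≤ n) :
    eval (fun _ => (1 : ℤ)) (Spoly n k) = s1 n k ∧
      s1 n k = (-1) ^ (n - k) * (cyc n k : ℤ) := by
  obtain ⟨m, rfl⟩ := Nat.exists_eq_add_of_le' (hk.trans hkn)
  exact ⟨eval_one_spoly m k, s1_eq_neg_one_pow_mul_cyc hkn⟩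
end
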